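/- For every integer n ≥ 3, the zero forcing number of the wheel graph W_{1,n} equals 3: Z(W_{1,n}) = 3. -/

import Mathlib

open SimpleGraph

variable {V : Type*}

/-- `W` is a resolving set of `G`: every pair of distinct vertices is resolved
by some vertex of `W` via graph distance. -/
def IsResolvingSet (G : SimpleGraph V) (W : Set V) : Prop :=
  ∀ u v : V, u ≠ v → ∃ w ∈ W, G.dist u w ≠ G.dist v w

/-- The metric dimension of `G`: minimum cardinality of a resolving set. -/
noncomputable def metricDim (G : SimpleGraph V) : ℕ :=
  sInf {k | ∃ W : Set V, W.ncard = k ∧ IsResolvingSet G W}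

/-- One global application of the zero-forcing color-change rule:
a black vertex `u` forces its unique white neighbor to become black. -/
def zfStep (G : SimpleGraph V) (S : Set V) : Set V :=
  S ∪ {v | ∃ u ∈ S, G.Adj u v ∧ ∀ w, G.Adj u w → w ∉ S → w = v}

/-- `S` is a zero forcing set of `G` if iterating the color-change rule
starting from `S` eventually turns all vertices black. -/
def IsZeroForcingSet (G : SimpleGraph V) (S : Set V) : Prop :=
  ∃ m : ℕ, (zfStep G)^[m] S = Set.univ

/-- The zero forcing number of `G`: minimum cardinality of a zero forcing set. -/
noncomputable def zeroForcingNum (G : SimpleGraph V) : ℕ :=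
  sInf {k | ∃ S : Set V, S.ncard = k ∧ IsZeroForcingSet G S}

/-- The wheel graph `W_{1,n} = C_n + K_1`: hub `none` joined to the cycle `C_n`
on vertices `some i`, `i : Fin n`. -/
def wheelGraph (n : ℕ) : SimpleGraph (Option (Fin n)) :=
  SimpleGraph.fromRel (fun u v =>
    match u, v with
    | none, some _ => True
    | some i, some j => ((i : ℕ) : ZMod n) + 1 = ((j : ℕ) : ZMod n)
    | _, _ => False)

/-- The bouquet of `n` circles of lengths `k 0 + 1, …, k (n-1) + 1`: the cut
vertex is `none`; the `i`-th circle consists of `none` together with the vertices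
`some ⟨i, j⟩`, `j : Fin (k i)`, in cyclic order. -/
def bouquet (n : ℕ) (k : Fin n → ℕ) : SimpleGraph (Option (Σ i : Fin n, Fin (k i))) :=
  SimpleGraph.fromRel (fun u v =>
    match u, v with
    | none, some a => (a.2 : ℕ) = 0 ∨ (a.2 : ℕ) = k a.1 - 1
    | some a, some b => a.1 = b.1 ∧ ((b.2 : ℕ) = (a.2 : ℕ) + 1)
    | _, _ => False)

/-- The path cover number of `G`: the minimum number of vertex-disjoint induced
paths covering all the vertices of `G`. -/
noncomputable def pathCoverNum (G : SimpleGraph V) : ℕ :=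
  sInf {m | ∃ f : V → Fin m, ∀ i : Fin m,
    ∃ k, 1 ≤ k ∧ Nonempty ((G.induce (f ⁻¹' {i})) ≃g SimpleGraph.pathGraph k)}

/-- `G` contains a Hamiltonian path. -/
def HasHamiltonianPath [DecidableEq V] (G : SimpleGraph V) : Prop :=
  ∃ (u v : V) (p : G.Walk u v), p.IsHamiltonian

/-!
A set `S` with `|S| < δ(G)` is a fixed point of the color-change rule: a black vertex has at most
`|S| - 1` black neighbours, hence at least two white ones, so it forces nothing. Hence
`δ(G) ≤ Z(G)`, and every vertex of `W_{1,n}` has degree at least 3. Conversely, once the hub and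
the rim vertices `0, …, m + 1` are black, the only white neighbour of `m + 1` is `m + 2`, so the
hub together with two consecutive rim vertices forces the whole wheel.
-/

section ZeroForcing

variable {G : SimpleGraph V}

lemma zeroForcingNum_le_ncard {S : Set V} (hS : IsZeroForcingSet G S) :
    zeroForcingNum G ≤ S.ncard :=
  Nat.sInf_le ⟨S, rfl, hS⟩

lemma zfStep_eq_self_of_ncard_lt_degree [Fintype V] [DecidableRel G.Adj] {S : Set V}
    (hS : ∀ u ∈ S, S.ncard < G.degree u) : zfStep G S = S := by
  refine Set.Subset.antisymm ?_ Set.subset_union_left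
  rintro v (hv | ⟨u, hu, -, hforced⟩)
  · exact hv
  have hdeg : G.degree u ≤ (G.neighborSet u \ S).ncard + (S \ {u}).ncard := by
    rw [← card_neighborFinset_eq_degree, ← Set.ncard_coe_finset, coe_neighborFinset]
    refine (Set.ncard_le_ncard fun w hw => ?_).trans (Set.ncard_union_le _ _)
    by_cases hwS : w ∈ S
    · exact Or.inr ⟨hwS, (G.ne_of_adj hw).symm⟩
    · exact Or.inl ⟨hw, hwS⟩
  rw [Set.ncard_sdiff_singleton_of_mem hu] at hdeg
  have hpos : 0 < S.ncard := (Set.ncard_pos).2 ⟨u, hu⟩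
  have hwhite : 1 < (G.neighborSet u \ S).ncard := by have := hS u hu; omega
  obtain ⟨a, b, ha, hb, hab⟩ := (Set.one_lt_ncard_iff).1 hwhite
  exact absurd ((hforced a ha.1 ha.2).trans (hforced b hb.1 hb.2).symm) hab

lemma minDegree_le_zeroForcingNum [Fintype V] [DecidableRel G.Adj] :
    G.minDegree ≤ zeroForcingNum G := by
  cases isEmpty_or_nonempty V
  · simp [minDegree_of_subsingleton]
  refine le_csInf ⟨_, Set.univ, rfl, 0, rfl⟩ ?_
  rintro _ ⟨S, rfl, m, hm⟩
  by_contra! hS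
  have hfixed : zfStep G S = S :=
    zfStep_eq_self_of_ncard_lt_degree fun u _ => hS.trans_le (G.minDegree_le_degree u)
  rw [Function.iterate_fixed hfixed] at hm
  subst hm
  have := G.minDegree_lt_card
  rw [Set.ncard_univ, Nat.card_eq_fintype_card] at hS
  omega

end ZeroForcing

lemma SimpleGraph.three_le_degree [Fintype V] {G : SimpleGraph V} [DecidableRel G.Adj]
    {v x y z : V} (hx : G.Adj v x) (hy : G.Adj v y) (hz : G.Adj v z)
    (hxy : x ≠ y) (hxz : x ≠ z) (hyz : y ≠ z) : 3 ≤ G.degree v := by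
  classical
  rw [← card_neighborFinset_eq_degree]
  calc 3 = ({x, y, z} : Finset V).card :=
        (Finset.card_eq_three.2 ⟨x, y, z, hxy, hxz, hyz, rfl⟩).symm
    _ ≤ _ := Finset.card_le_card (by simp [Finset.insert_subset_iff, hx, hy, hz])

section Wheel

variable {n : ℕ}

lemma wheelGraph_adj_none_some (i : Fin n) : (wheelGraph n).Adj none (some i) := by
  simp [wheelGraph]

lemma ZMod.natCast_add_one_eq_natCast_iff {a b : ℕ} (ha : a < n) (hb : b < n) :
    (a : ZMod n) + 1 = b ↔ a + 1 = b ∨ (a + 1 = n ∧ b = 0) := by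
  rw [← Nat.cast_succ, ZMod.natCast_eq_natCast_iff', Nat.mod_eq_of_lt hb]
  rcases (Nat.succ_le_of_lt ha).lt_or_eq with h | h
  · rw [Nat.mod_eq_of_lt h]; omega
  · rw [h, Nat.mod_self]; omega

lemma wheelGraph_adj_some_some (hn : 2 ≤ n) {i j : Fin n} :
    (wheelGraph n).Adj (some i) (some j) ↔
      (i : ℕ) + 1 = j ∨ (j : ℕ) + 1 = i ∨
        ((i : ℕ) + 1 = n ∧ (j : ℕ) = 0) ∨ ((j : ℕ) + 1 = n ∧ (i : ℕ) = 0) := by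
  simp only [wheelGraph, fromRel_adj, ne_eq, Option.some.injEq, Fin.ext_iff,
    ZMod.natCast_add_one_eq_natCast_iff i.isLt j.isLt,
    ZMod.natCast_add_one_eq_natCast_iff j.isLt i.isLt]
  omega

lemma isZeroForcingSet_wheelGraph (hn : 3 ≤ n) :
    IsZeroForcingSet (wheelGraph n) {none, some ⟨0, by omega⟩, some ⟨1, by omega⟩} := by
  set S : Set (Option (Fin n)) := {none, some ⟨0, by omega⟩, some ⟨1, by omega⟩}
  have black : ∀ m, none ∈ (zfStep (wheelGraph n))^[m] S ∧
      ∀ j : Fin n, (j : ℕ) < m + 2 → some j ∈ (zfStep (wheelGraph n))^[m] S := by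
    intro m
    induction m with
    | zero =>
      refine ⟨Or.inl rfl, fun j hj => ?_⟩
      obtain h | h : (j : ℕ) = 0 ∨ (j : ℕ) = 1 := by omega
      · exact Or.inr (Or.inl (congrArg some (Fin.ext h)))
      · exact Or.inr (Or.inr (congrArg some (Fin.ext h)))
    | succ m ih =>
      obtain ⟨hub, rim⟩ := ih
      rw [Function.iterate_succ_apply']
      refine ⟨Or.inl hub, fun j hj => ?_⟩
      rcases Nat.lt_succ_iff_lt_or_eq.1 hj with hj | hj
      · exact Or.inl (rim j hj)
      refine Or.inr ⟨some ⟨m + 1, by omega⟩, rim _ (by simp),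
        (wheelGraph_adj_some_some (by omega)).2 (by simp [hj]), ?_⟩
      rintro (_ | k) hk hkS
      · exact absurd hub hkS
      rw [wheelGraph_adj_some_some (by omega), Fin.val_mk] at hk
      have hk' : (k : ℕ) = m + 2 := by
        by_contra
        exact hkS (rim k (by omega))
      exact congrArg some (Fin.ext (hk'.trans hj.symm))
  refine ⟨n - 2, Set.eq_univ_of_forall ?_⟩
  rintro (_ | j)
  · exact (black _).1
  · exact (black _).2 j (by omega)

lemma three_le_minDegree_wheelGraph (hn : 3 ≤ n) [DecidableRel (wheelGraph n).Adj] :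
    3 ≤ (wheelGraph n).minDegree := by
  refine le_minDegree_of_forall_le_degree _ _ ?_
  rintro (_ | i)
  · refine three_le_degree (x := some ⟨0, by omega⟩) (y := some ⟨1, by omega⟩)
      (z := some ⟨2, by omega⟩) (wheelGraph_adj_none_some _) (wheelGraph_adj_none_some _)
      (wheelGraph_adj_none_some _) ?_ ?_ ?_ <;> simp
  · obtain ⟨j, hj⟩ :
        ∃ j : Fin n, (i : ℕ) + 1 = j ∨ ((i : ℕ) + 1 = n ∧ (j : ℕ) = 0) := by
      by_cases h : (i : ℕ) + 1 < n
      exacts [⟨⟨_, h⟩, Or.inl rfl⟩, ⟨⟨0, by omega⟩, Or.inr ⟨by omega, rfl⟩⟩]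
    obtain ⟨k, hk⟩ :
        ∃ k : Fin n, (k : ℕ) + 1 = i ∨ ((k : ℕ) + 1 = n ∧ (i : ℕ) = 0) := by
      by_cases h : (i : ℕ) = 0
      exacts [⟨⟨n - 1, by omega⟩, Or.inr ⟨show n - 1 + 1 = n by omega, h⟩⟩,
        ⟨⟨i - 1, by omega⟩, Or.inl (show (i : ℕ) - 1 + 1 = i by omega)⟩]
    refine three_le_degree (y := some j) (z := some k) (wheelGraph_adj_none_some i).symm
      ((wheelGraph_adj_some_some (by omega)).2 (by omega))
      ((wheelGraph_adj_some_some (by omega)).2 (by omega)) (by simp) (by simp) ?_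
    simp only [ne_eq, Option.some.injEq, Fin.ext_iff]
    omega

end Wheel

/-- For every integer `n ≥ 3`, the zero forcing number of the wheel graph
`W_{1,n}` equals 3. -/
theorem zeroForcingNum_wheelGraph (n : ℕ) (hn : 3 ≤ n) :
    zeroForcingNum (wheelGraph n) = 3 := by
  classical
  refine le_antisymm ?_ ((three_le_minDegree_wheelGraph hn).trans minDegree_le_zeroForcingNum)
  refine (zeroForcingNum_le_ncard (isZeroForcingSet_wheelGraph hn)).trans_eq ?_
  exact Set.ncard_eq_three.2 ⟨_, _, _, by simp, by simp, by simp, rfl⟩
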